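/- Given four points q₀, q₁, q₂, q₃ ∈ ℝ³, let P ∈ M₃(ℝ) be the matrix with columns q₁−q₀, q₂−q₀, q₃−q₀, assumed invertible; let s = (1,1,1)ᵀ ∈ ℝ³, let A ∈ M_{3×4}(ℝ) be the block matrix A = [−P⁻ᵀ s | P⁻ᵀ], and write G = P⁻¹P⁻ᵀ. Let ρ, μ, V, h > 0 and set L = μV·AᵀA ∈ M₄(ℝ). If ρ/(4h²μ) > 6·‖G‖_∞ (where ‖G‖_∞ = max_k Σ_l |G_{kl}|), then the diagonal mass entries strictly dominate the scaled absolute row sums of L: for every row i ∈ {0,1,2,3}, ρV/(4h²) > Σ_{j=0}^{3} |L_{ij}|. -/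

import Mathlib

open Matrix

/-- The edge-displacement matrix of the tetrahedron: columns q₁−q₀, q₂−q₀, q₃−q₀. -/
noncomputable def Pmat (q0 q1 q2 q3 : Fin 3 → ℝ) : Matrix (Fin 3) (Fin 3) ℝ :=
  Matrix.of fun i j => ![q1, q2, q3] j i - q0 i

/-- The spatial differential operator A = [−P⁻ᵀ s | P⁻ᵀ] with s = (1,1,1)ᵀ. -/
noncomputable def Amat (q0 q1 q2 q3 : Fin 3 → ℝ) : Matrix (Fin 3) (Fin 4) ℝ :=
  Matrix.of fun i j =>
    Fin.cases (-((((Pmat q0 q1 q2 q3)⁻¹)ᵀ *ᵥ fun _ => (1 : ℝ)) i))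
      (fun j' => ((Pmat q0 q1 q2 q3)⁻¹)ᵀ i j') j

/-!
The matrix `A = [−P⁻ᵀ s | P⁻ᵀ]` factors as `P⁻ᵀ E` with `E = [−s | I]` (`edgeDifference ℝ 3`),
so `AᵀA = Eᵀ (P⁻¹P⁻ᵀ) E = Eᵀ G E`. The row-sum norm `‖·‖_∞` is submultiplicative, and
`‖E‖_∞ = 2`, `‖Eᵀ‖_∞ = 3`, hence every absolute row sum of `AᵀA` is at most `6‖G‖_∞`;
the hypothesis then bounds the row sums of `L = μV·AᵀA` by `μV · ρ/(4h²μ) = ρV/(4h²)`.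
-/

attribute [local instance] Matrix.linftyOpSeminormedAddCommGroup Matrix.linftyOpNormSMulClass

namespace Matrix

variable {m n α : Type*} [Fintype m] [Fintype n] [SeminormedAddCommGroup α]

theorem linfty_opNorm_le_iff {A : Matrix m n α} {r : ℝ} (hr : 0 ≤ r) :
    ‖A‖ ≤ r ↔ ∀ i, ∑ j, ‖A i j‖ ≤ r := by
  change ‖fun i => WithLp.toLp 1 (A i)‖ ≤ r ↔ _
  simp only [pi_norm_le_iff_of_nonneg hr, PiLp.norm_eq_of_L1]

theorem linfty_opNorm_le_iSup (A : Matrix m n α) : ‖A‖ ≤ ⨆ i, ∑ j, ‖A i j‖ :=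
  (linfty_opNorm_le_iff (Real.iSup_nonneg fun _ => by positivity)).2
    (le_ciSup (Finite.bddAbove_range _))

theorem sum_norm_le_linfty_opNorm (A : Matrix m n α) (i : m) : ∑ j, ‖A i j‖ ≤ ‖A‖ :=
  (linfty_opNorm_le_iff (norm_nonneg A)).1 le_rfl i

end Matrix

def edgeDifference (R : Type*) [Ring R] (n : ℕ) : Matrix (Fin n) (Fin (n + 1)) R :=
  of fun k => Fin.cons (-1) (Pi.single k 1)

section Ring

variable {R m : Type*} [Ring R] {n : ℕ}

@[simp]
theorem mul_edgeDifference_apply_zero [Fintype m] (B : Matrix m (Fin n) R) (i : m) :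
    (B * edgeDifference R n) i 0 = -(B *ᵥ fun _ => 1) i := by
  simp [edgeDifference, mul_apply, mulVec, dotProduct]

@[simp]
theorem mul_edgeDifference_apply_succ (B : Matrix m (Fin n) R) (i : m) (j : Fin n) :
    (B * edgeDifference R n) i j.succ = B i j := by
  simp [edgeDifference, mul_apply, Pi.single_apply]

end Ring

section Norm

variable {R : Type*} [SeminormedRing R] [NormOneClass R] {n : ℕ}

theorem linfty_opNorm_edgeDifference_le : ‖edgeDifference R n‖ ≤ 2 := by
  refine (linfty_opNorm_le_iff zero_le_two).2 fun k => ?_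
  simp [edgeDifference, Fin.sum_univ_succ, Pi.single_apply, apply_ite (‖·‖)]
  norm_num

theorem linfty_opNorm_edgeDifference_transpose_le : ‖(edgeDifference R n)ᵀ‖ ≤ n := by
  refine (linfty_opNorm_le_iff n.cast_nonneg).2 fun j => ?_
  cases j using Fin.cases with
  | zero => simp [edgeDifference]
  | succ j =>
    simpa [edgeDifference, Pi.single_apply, apply_ite (‖·‖)] using Nat.succ_le_of_lt j.pos

end Norm

theorem linfty_opNorm_gram_mul_edgeDifference_le {R m : Type*} [SeminormedCommRing R]
    [NormOneClass R] [Fintype m] {n : ℕ} (B : Matrix m (Fin n) R) :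
    ‖(B * edgeDifference R n)ᵀ * (B * edgeDifference R n)‖ ≤ 2 * n * ‖Bᵀ * B‖ := by
  set E := edgeDifference R n
  calc ‖(B * E)ᵀ * (B * E)‖ = ‖Eᵀ * (Bᵀ * B) * E‖ := by
        simp only [transpose_mul, Matrix.mul_assoc]
    _ ≤ ‖Eᵀ‖ * ‖Bᵀ * B‖ * ‖E‖ :=
        (linfty_opNorm_mul _ _).trans (by gcongr; exact linfty_opNorm_mul _ _)
    _ ≤ n * ‖Bᵀ * B‖ * 2 := by
        gcongr
        · exact linfty_opNorm_edgeDifference_transpose_le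
        · exact linfty_opNorm_edgeDifference_le
    _ = 2 * n * ‖Bᵀ * B‖ := by ring

theorem Amat_eq_mul_edgeDifference (q0 q1 q2 q3 : Fin 3 → ℝ) :
    Amat q0 q1 q2 q3 = ((Pmat q0 q1 q2 q3)⁻¹)ᵀ * edgeDifference ℝ 3 := by
  ext i j
  cases j using Fin.cases <;> simp [Amat]

theorem mass_dominates_row_sums_general {q0 q1 q2 q3 : Fin 3 → ℝ}
    (ρ μ V h : ℝ) (hμ : 0 < μ) (hV : 0 < V)
    (hcond : 6 * (⨆ k : Fin 3,
        ∑ l, |((Pmat q0 q1 q2 q3)⁻¹ * ((Pmat q0 q1 q2 q3)⁻¹)ᵀ) k l|)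
      < ρ / (4 * h ^ 2 * μ)) :
    ∀ i : Fin 4,
      ∑ j, |((μ * V) • ((Amat q0 q1 q2 q3)ᵀ * Amat q0 q1 q2 q3)) i j|
        < ρ * V / (4 * h ^ 2) := by
  intro i
  set G := (Pmat q0 q1 q2 q3)⁻¹ * ((Pmat q0 q1 q2 q3)⁻¹)ᵀ
  set A := Amat q0 q1 q2 q3
  have hA : ‖Aᵀ * A‖ ≤ 6 * ⨆ k, ∑ l, |G k l| := by
    have hgram := linfty_opNorm_gram_mul_edgeDifference_le ((Pmat q0 q1 q2 q3)⁻¹)ᵀ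
    rw [transpose_transpose, ← Amat_eq_mul_edgeDifference] at hgram
    have hG := linfty_opNorm_le_iSup G
    simp only [Real.norm_eq_abs] at hG
    linarith
  calc ∑ j, |((μ * V) • (Aᵀ * A)) i j| ≤ ‖(μ * V) • (Aᵀ * A)‖ := by
        simpa only [Real.norm_eq_abs] using sum_norm_le_linfty_opNorm ((μ * V) • (Aᵀ * A)) i
    _ = μ * V * ‖Aᵀ * A‖ := by rw [norm_smul, Real.norm_of_nonneg (by positivity)]
    _ ≤ μ * V * (6 * ⨆ k, ∑ l, |G k l|) := by gcongr
    _ < μ * V * (ρ / (4 * h ^ 2 * μ)) := by gcongr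
    _ = ρ * V / (4 * h ^ 2) := by field_simp

/-- If ρ/(4h²μ) > 6‖G‖_∞ with G = P⁻¹P⁻ᵀ, then the mass diagonal ρV/(4h²) strictly
dominates every absolute row sum of L = μV·AᵀA. -/
theorem mass_dominates_row_sums {q0 q1 q2 q3 : Fin 3 → ℝ}
    (hP : IsUnit (Pmat q0 q1 q2 q3).det)
    (ρ μ V h : ℝ) (hρ : 0 < ρ) (hμ : 0 < μ) (hV : 0 < V) (hh : 0 < h)
    (hcond : 6 * (⨆ k : Fin 3,
        ∑ l, |((Pmat q0 q1 q2 q3)⁻¹ * ((Pmat q0 q1 q2 q3)⁻¹)ᵀ) k l|)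
      < ρ / (4 * h ^ 2 * μ)) :
    ∀ i : Fin 4,
      ∑ j, |((μ * V) • ((Amat q0 q1 q2 q3)ᵀ * Amat q0 q1 q2 q3)) i j|
        < ρ * V / (4 * h ^ 2) :=
  mass_dominates_row_sums_general ρ μ V h hμ hV hcond
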